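/- Let f : ℝ² → ℝ be smooth with f ≥ c > 0 everywhere. Then the map 𝒥 : ℝ² → ℝ² defined by 𝒥(r,s) = (∫₀ʳ f(ℓ,s) dℓ, s) is a smooth global diffeomorphism of ℝ². -/

import Mathlib

set_option maxHeartbeats 1000000
set_option synthInstance.maxHeartbeats 1000000


open MeasureTheory Metric intervalIntegral Set
open scoped NNReal ENNReal Topology

noncomputable def diagEquiv (aa bb : ℝ) (ha : aa ≠ 0) : (ℝ × ℝ) ≃L[ℝ] (ℝ × ℝ) :=
  LinearEquiv.toContinuousLinearEquiv
    { toFun := fun x => (aa * x.1 + bb * x.2, x.2)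
      map_add' := by intro x y; simp [Prod.ext_iff]; ring
      map_smul' := by intro m x; simp [Prod.ext_iff]; ring
      invFun := fun y => ((y.1 - bb * y.2) / aa, y.2)
      left_inv := by
        intro x
        simp only [Prod.ext_iff]
        constructor
        · field_simp; ring
        · trivial
      right_inv := by
        intro y
        simp only [Prod.ext_iff]
        constructor
        · field_simp; ring
        · trivial }

lemma primitive_contDiff {f : ℝ × ℝ → ℝ} (hf : ContDiff ℝ (⊤ : ℕ∞) f) :
    ContDiff ℝ (⊤ : ℕ∞) (fun q : ℝ × ℝ => ∫ ℓ in (0:ℝ)..q.1, f (ℓ, q.2)) := by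
  let χ : ContDiffBump (0:ℝ) := ⟨2, 3, by norm_num, by norm_num⟩
  let g : ℝ × ℝ → ℝ → ℝ := fun p y => χ y * (p.1 * f (-y * p.1, p.2))
  let ind : ℝ → ℝ := (Icc (0:ℝ) 1).indicator (fun _ => (1:ℝ))
  have hind : LocallyIntegrable ind volume :=
    ((continuous_const.integrableOn_Icc (μ := volume)).integrable_indicator
      measurableSet_Icc).locallyIntegrable
  have hg : ContDiffOn ℝ (⊤ : ℕ∞) (Function.HasUncurry.uncurry g) (univ ×ˢ univ) := by
    apply ContDiff.contDiffOn
    show ContDiff ℝ _ (fun q : (ℝ × ℝ) × ℝ => χ q.2 * (q.1.1 * f (-q.2 * q.1.1, q.1.2)))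
    exact (χ.contDiff.comp contDiff_snd).mul (contDiff_fst.fst.mul
      (hf.comp ((contDiff_snd.neg.mul contDiff_fst.fst).prodMk contDiff_fst.snd)))
  have hgs : ∀ p, ∀ x, p ∈ (univ : Set (ℝ × ℝ)) → x ∉ closedBall (0:ℝ) 3 → g p x = 0 := by
    intro p x _ hx
    have : χ x = 0 := χ.zero_of_le_dist (by
      rw [mem_closedBall, not_le] at hx
      exact hx.le)
    simp only [g, this, zero_mul]
  have key := contDiffOn_convolution_right_with_param_comp (μ := volume) (ContinuousLinearMap.lsmul ℝ ℝ)
    (v := fun _ : ℝ × ℝ => (0:ℝ)) contDiffOn_const isOpen_univ (isCompact_closedBall 0 3) hgs hind hg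
  rw [contDiffOn_univ] at key
  convert key using 1
  funext q
  rw [convolution_lsmul]
  have hfun : (fun t => ind t • g q (0 - t))
      = (Icc (0:ℝ) 1).indicator (fun t => q.1 • f (0 + t * q.1, q.2)) := by
    funext t
    by_cases ht : t ∈ Icc (0:ℝ) 1
    · have h1 : χ (0 - t) = 1 := χ.one_of_mem_closedBall (by
        rw [mem_closedBall, dist_zero_right, Real.norm_eq_abs, abs_le]
        show -2 ≤ 0 - t ∧ 0 - t ≤ 2
        constructor <;> linarith [ht.1, ht.2])
      rw [zero_sub] at h1
      simp [ind, g, ht, h1]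
    · simp [ind, ht]
  rw [hfun, MeasureTheory.integral_indicator measurableSet_Icc, integral_Icc_eq_integral_Ioc,
    ← intervalIntegral.integral_of_le zero_le_one]
  have := intervalIntegral.integral_comp_smul_deriv
    (a := (0:ℝ)) (b := (1:ℝ))
    (f := fun t : ℝ => 0 + t * q.1) (f' := fun _ : ℝ => q.1)
    (g := fun ℓ : ℝ => f (ℓ, q.2))
    (fun t _ => by simpa using ((hasDerivAt_id t).mul_const q.1).const_add 0)
    continuousOn_const
    (hf.continuous.comp (continuous_id.prodMk continuous_const))
  simpa using this.symm

/-- Lemma 2.9: if f : ℝ² → ℝ is smooth, bounded with bounded derivatives, and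
f ≥ c > 0, then 𝒥(r,s) = (∫₀ʳ f(ℓ,s) dℓ, s) is a smooth global diffeomorphism. -/
theorem global_diffeo_of_positive_integrand
    (f : ℝ × ℝ → ℝ) (c : ℝ) (hc : 0 < c)
    (hf : ContDiff ℝ (⊤ : ℕ∞) f)
    (hbdd : ∀ n : ℕ, ∃ C : ℝ, ∀ x : ℝ × ℝ, ‖iteratedFDeriv ℝ n f x‖ ≤ C)
    (hfc : ∀ x : ℝ × ℝ, c ≤ f x) :
    letI J : ℝ × ℝ → ℝ × ℝ := fun p => (∫ ℓ in (0:ℝ)..p.1, f (ℓ, p.2), p.2)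
    ContDiff ℝ (⊤ : ℕ∞) J ∧
      ∃ Jinv : ℝ × ℝ → ℝ × ℝ, ContDiff ℝ (⊤ : ℕ∞) Jinv ∧
        Function.LeftInverse Jinv J ∧ Function.RightInverse Jinv J := by
  set J : ℝ × ℝ → ℝ × ℝ := fun p => (∫ ℓ in (0:ℝ)..p.1, f (ℓ, p.2), p.2) with hJdef
  have hfcont : Continuous f := hf.continuous
  have hpos : ∀ p : ℝ × ℝ, 0 < f p := fun p => lt_of_lt_of_le hc (hfc p)
  have hJ₁c : ContDiff ℝ (⊤ : ℕ∞) (fun q : ℝ × ℝ => ∫ ℓ in (0:ℝ)..q.1, f (ℓ, q.2)) :=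
    primitive_contDiff hf
  have hJ : ContDiff ℝ (⊤ : ℕ∞) J := hJ₁c.prodMk contDiff_snd
  have hint : ∀ (x y : ℝ) (s : ℝ), IntervalIntegrable (fun ℓ => f (ℓ, s)) volume x y :=
    fun x y s => ((hfcont.comp (continuous_id.prodMk continuous_const)).intervalIntegrable x y)
  have hFTC : ∀ p : ℝ × ℝ, HasDerivAt (fun r => ∫ ℓ in (0:ℝ)..r, f (ℓ, p.2)) (f p) p.1 := by
    intro p
    have := (hfcont.comp
      (continuous_id.prodMk (continuous_const (y := p.2)))).integral_hasStrictDerivAt 0 p.1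
    simpa using this.hasDerivAt
  have hmono : ∀ s : ℝ, StrictMono (fun r => ∫ ℓ in (0:ℝ)..r, f (ℓ, s)) := by
    intro s
    apply strictMono_of_deriv_pos
    intro r
    rw [(hFTC (r, s)).deriv]
    exact hpos (r, s)
  have hsurj1 : ∀ s : ℝ, Function.Surjective (fun r => ∫ ℓ in (0:ℝ)..r, f (ℓ, s)) := by
    intro s
    have hcont : Continuous (fun r => ∫ ℓ in (0:ℝ)..r, f (ℓ, s)) := by
      rw [continuous_iff_continuousAt]
      exact fun r => ((hFTC (r, s)).continuousAt)
    have hlow : ∀ r : ℝ, 0 ≤ r → c * r ≤ ∫ ℓ in (0:ℝ)..r, f (ℓ, s) := by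
      intro r hr
      have hm := intervalIntegral.integral_mono_on (μ := volume) (a := 0) (b := r) hr
        (_root_.intervalIntegrable_const (c := c)) (hint 0 r s) (fun x _ => hfc (x, s))
      rw [intervalIntegral.integral_const] at hm
      calc c * r = (r - 0) • c := by rw [smul_eq_mul]; ring
        _ ≤ _ := hm
    have hhigh : ∀ r : ℝ, r ≤ 0 → (∫ ℓ in (0:ℝ)..r, f (ℓ, s)) ≤ c * r := by
      intro r hr
      have hm := intervalIntegral.integral_mono_on (μ := volume) (a := r) (b := 0) hr
        (_root_.intervalIntegrable_const (c := c)) (hint r 0 s) (fun x _ => hfc (x, s))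
      rw [intervalIntegral.integral_const] at hm
      rw [intervalIntegral.integral_symm]
      calc -(∫ ℓ in r..(0:ℝ), f (ℓ, s)) ≤ -((0 - r) • c) := by linarith [hm]
        _ = c * r := by rw [smul_eq_mul]; ring
    have htop : Filter.Tendsto (fun r => ∫ ℓ in (0:ℝ)..r, f (ℓ, s)) Filter.atTop Filter.atTop := by
      apply Filter.tendsto_atTop_mono' _ _ (Filter.Tendsto.const_mul_atTop hc Filter.tendsto_id)
      filter_upwards [Filter.eventually_ge_atTop (0:ℝ)] with r hr
      simpa using hlow r hr
    have hbot : Filter.Tendsto (fun r => ∫ ℓ in (0:ℝ)..r, f (ℓ, s)) Filter.atBot Filter.atBot := by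
      apply Filter.tendsto_atBot_mono' _ _ (Filter.Tendsto.const_mul_atBot hc Filter.tendsto_id)
      filter_upwards [Filter.eventually_le_atBot (0:ℝ)] with r hr
      simpa using hhigh r hr
    exact hcont.surjective htop hbot
  have hJinj : Function.Injective J := by
    intro p q h
    have h2 : p.2 = q.2 := by
      have := congrArg (Prod.snd : ℝ × ℝ → ℝ) h
      simpa [hJdef] using this
    have h1 : (∫ ℓ in (0:ℝ)..p.1, f (ℓ, p.2)) = ∫ ℓ in (0:ℝ)..q.1, f (ℓ, q.2) := by
      have := congrArg (Prod.fst : ℝ × ℝ → ℝ) h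
      simpa [hJdef] using this
    rw [← h2] at h1
    exact Prod.ext ((hmono p.2).injective h1) h2
  have hJsurj : Function.Surjective J := by
    intro q
    obtain ⟨r, hr⟩ := hsurj1 q.2 q.1
    exact ⟨(r, q.2), Prod.ext hr rfl⟩
  refine ⟨hJ, Function.invFun J, ?_, Function.leftInverse_invFun hJinj,
    Function.rightInverse_invFun hJsurj⟩
  rw [contDiff_iff_contDiffAt]
  intro q
  set p : ℝ × ℝ := Function.invFun J q with hpdef
  have hq : J p = q := Function.rightInverse_invFun hJsurj q
  -- derivative of J at p
  have hdJ1 : HasFDerivAt (fun q : ℝ × ℝ => ∫ ℓ in (0:ℝ)..q.1, f (ℓ, q.2))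
      (fderiv ℝ (fun q : ℝ × ℝ => ∫ ℓ in (0:ℝ)..q.1, f (ℓ, q.2)) p) p :=
    (hJ₁c.differentiable (by simp) p).hasFDerivAt
  set D := fderiv ℝ (fun q : ℝ × ℝ => ∫ ℓ in (0:ℝ)..q.1, f (ℓ, q.2)) p with hDdef
  have hcurve : HasDerivAt (fun r : ℝ => ((r : ℝ), p.2)) ((1:ℝ), (0:ℝ)) p.1 :=
    (hasDerivAt_id p.1).prodMk (hasDerivAt_const p.1 p.2)
  have hcomp : HasDerivAt (fun r : ℝ => ∫ ℓ in (0:ℝ)..r, f (ℓ, p.2)) (D (1, 0)) p.1 := by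
    have := hdJ1.comp_hasDerivAt p.1 hcurve
    exact this
  have ha : D (1, 0) = f p := hcomp.unique (hFTC p)
  set e := diagEquiv (f p) (D (0, 1)) (ne_of_gt (hpos p)) with hedef
  have heq : (e : (ℝ × ℝ) →L[ℝ] (ℝ × ℝ)) = D.prod (ContinuousLinearMap.snd ℝ ℝ ℝ) := by
    apply ContinuousLinearMap.ext
    intro x
    have hx : x = x.1 • ((1:ℝ), (0:ℝ)) + x.2 • ((0:ℝ), (1:ℝ)) := by
      simp [Prod.ext_iff]
    refine Prod.ext ?_ rfl
    show f p * x.1 + D (0, 1) * x.2 = D x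
    conv_rhs => rw [hx]
    rw [map_add, D.map_smul, D.map_smul, ha, smul_eq_mul, smul_eq_mul]
    ring
  have hfd : HasFDerivAt J (e : (ℝ × ℝ) →L[ℝ] (ℝ × ℝ)) p := by
    rw [heq]
    exact hdJ1.prodMk (hasFDerivAt_snd)
  have hJcAt : ContDiffAt ℝ (⊤ : ℕ∞) J p := hJ.contDiffAt
  have hloc := hJcAt.to_localInverse (f' := e) hfd (by simp)
  rw [hq] at hloc
  apply hloc.congr_of_eventuallyEq
  have hev := (hJcAt.hasStrictFDerivAt' (f' := e) hfd (by simp)).eventually_right_inverse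
  rw [hq] at hev
  filter_upwards [hev] with z hz
  calc Function.invFun J z
      = Function.invFun J (J ((hJcAt.localInverse (f' := e) hfd (by simp)) z)) := by
        rw [show J ((hJcAt.localInverse (f' := e) hfd (by simp)) z) = z from hz]
    _ = (hJcAt.localInverse (f' := e) hfd (by simp)) z := Function.leftInverse_invFun hJinj _
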